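/- Let p(x,t) > 0 and v(x,t) be smooth functions and define u = p_x/p, and let q be a smooth function with v_x = p q. If u and v satisfy system (3.2): u_t = u_{xxx} + 3u u_{xx} + 3u² u_x + 3u_x² + ε(v_{xx} + 2u v_x)_x and v_t = v_{xxx} − 3u v_{xx} + 3u² v_x + 2ε v_x², and additionally p_t = p_{xxx} + ε(p² q_x + 3 q p p_x), then q satisfies the Sasa–Satsuma equation q_t = q_{xxx} + ε(q² p_x + 3 p q q_x). -/

import Mathlib

noncomputable def px (f : ℝ → ℝ → ℝ) : ℝ → ℝ → ℝ := fun x t => deriv (fun y => f y t) x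
noncomputable def pt (f : ℝ → ℝ → ℝ) : ℝ → ℝ → ℝ := fun x t => deriv (fun s => f x s) t

section helpers
variable {f : ℝ → ℝ → ℝ}

lemma diffx (hf : ContDiff ℝ (⊤ : ℕ∞) (fun r : ℝ × ℝ => f r.1 r.2)) (t x : ℝ) :
    DifferentiableAt ℝ (fun y => f y t) x := by
  have : ContDiff ℝ (⊤ : ℕ∞) (fun y : ℝ => f y t) :=
    hf.comp (contDiff_id.prodMk contDiff_const)
  exact (this.differentiable (by simp)).differentiableAt

lemma difft (hf : ContDiff ℝ (⊤ : ℕ∞) (fun r : ℝ × ℝ => f r.1 r.2)) (x t : ℝ) :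
    DifferentiableAt ℝ (fun s => f x s) t := by
  have : ContDiff ℝ (⊤ : ℕ∞) (fun s : ℝ => f x s) :=
    hf.comp (contDiff_const.prodMk contDiff_id)
  exact (this.differentiable (by simp)).differentiableAt

lemma px_eq_fderiv (hf : ContDiff ℝ (⊤ : ℕ∞) (fun r : ℝ × ℝ => f r.1 r.2)) (x t : ℝ) :
    px f x t = fderiv ℝ (fun r : ℝ × ℝ => f r.1 r.2) (x, t) (1, 0) := by
  unfold px
  have hF := (hf.differentiable (by simp) (x, t)).hasFDerivAt
  have hcurve : HasDerivAt (fun y : ℝ => (y, t)) ((1 : ℝ), (0 : ℝ)) x :=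
    (hasDerivAt_id x).prodMk (hasDerivAt_const x t)
  have h := (hF.comp_hasDerivAt x hcurve).deriv
  simp only [Function.comp_def] at h
  exact h

lemma pt_eq_fderiv (hf : ContDiff ℝ (⊤ : ℕ∞) (fun r : ℝ × ℝ => f r.1 r.2)) (x t : ℝ) :
    pt f x t = fderiv ℝ (fun r : ℝ × ℝ => f r.1 r.2) (x, t) (0, 1) := by
  unfold pt
  have hF := (hf.differentiable (by simp) (x, t)).hasFDerivAt
  have hcurve : HasDerivAt (fun s : ℝ => (x, s)) ((0 : ℝ), (1 : ℝ)) t :=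
    (hasDerivAt_const t x).prodMk (hasDerivAt_id t)
  have h := (hF.comp_hasDerivAt t hcurve).deriv
  simp only [Function.comp_def] at h
  exact h

lemma contDiff_px (hf : ContDiff ℝ (⊤ : ℕ∞) (fun r : ℝ × ℝ => f r.1 r.2)) :
    ContDiff ℝ (⊤ : ℕ∞) (fun r : ℝ × ℝ => px f r.1 r.2) := by
  have h : (fun r : ℝ × ℝ => px f r.1 r.2)
      = fun r => fderiv ℝ (fun r : ℝ × ℝ => f r.1 r.2) r ((1 : ℝ), (0 : ℝ)) := by
    funext r
    rw [px_eq_fderiv hf]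
  rw [h]
  exact (hf.fderiv_right (by simp)).clm_apply contDiff_const

lemma contDiff_pt (hf : ContDiff ℝ (⊤ : ℕ∞) (fun r : ℝ × ℝ => f r.1 r.2)) :
    ContDiff ℝ (⊤ : ℕ∞) (fun r : ℝ × ℝ => pt f r.1 r.2) := by
  have h : (fun r : ℝ × ℝ => pt f r.1 r.2)
      = fun r => fderiv ℝ (fun r : ℝ × ℝ => f r.1 r.2) r ((0 : ℝ), (1 : ℝ)) := by
    funext r
    rw [pt_eq_fderiv hf]
  rw [h]
  exact (hf.fderiv_right (by simp)).clm_apply contDiff_const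

lemma pt_px_comm (hf : ContDiff ℝ (⊤ : ℕ∞) (fun r : ℝ × ℝ => f r.1 r.2)) (x t : ℝ) :
    pt (px f) x t = px (pt f) x t := by
  set F := fun r : ℝ × ℝ => f r.1 r.2 with hF
  have hdF : ∀ y, HasFDerivAt F (fderiv ℝ F y) y := fun y =>
    (hf.differentiable (by simp) y).hasFDerivAt
  have hd2 : HasFDerivAt (fderiv ℝ F) (fderiv ℝ (fderiv ℝ F) (x, t)) (x, t) :=
    (((hf.fderiv_right (m := (⊤ : ℕ∞)) (by simp)).differentiable (by simp)) (x, t)).hasFDerivAt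
  have hsymm := second_derivative_symmetric hdF hd2 ((1 : ℝ), (0 : ℝ)) ((0 : ℝ), (1 : ℝ))
  have key : ∀ v : ℝ × ℝ, ∀ w : ℝ × ℝ,
      fderiv ℝ (fun r => fderiv ℝ F r v) (x, t) w = fderiv ℝ (fderiv ℝ F) (x, t) w v := by
    intro v w
    have this1 := ((ContinuousLinearMap.apply ℝ ℝ v).hasFDerivAt.comp (x, t) hd2).fderiv
    have h2 : (fun r => fderiv ℝ F r v)
        = ⇑(ContinuousLinearMap.apply ℝ ℝ v) ∘ fderiv ℝ F := rfl
    rw [h2, this1]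
    rfl
  have h1 : pt (px f) x t = fderiv ℝ (fderiv ℝ F) (x, t) ((0:ℝ), (1:ℝ)) ((1:ℝ), (0:ℝ)) := by
    rw [pt_eq_fderiv (contDiff_px hf) x t]
    have h : (fun r : ℝ × ℝ => px f r.1 r.2)
        = fun r => fderiv ℝ F r ((1 : ℝ), (0 : ℝ)) := by
      funext r; rw [px_eq_fderiv hf]
    rw [h, key]
  have h2 : px (pt f) x t = fderiv ℝ (fderiv ℝ F) (x, t) ((1:ℝ), (0:ℝ)) ((0:ℝ), (1:ℝ)) := by
    rw [px_eq_fderiv (contDiff_pt hf) x t]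
    have h : (fun r : ℝ × ℝ => pt f r.1 r.2)
        = fun r => fderiv ℝ F r ((0 : ℝ), (1 : ℝ)) := by
      funext r; rw [pt_eq_fderiv hf]
    rw [h, key]
  rw [h1, h2]; exact hsymm.symm

end helpers

lemma hasDerivAt_slice {f : ℝ → ℝ → ℝ} (hf : ContDiff ℝ (⊤ : ℕ∞) (fun r : ℝ × ℝ => f r.1 r.2))
    (t x : ℝ) : HasDerivAt (fun y => f y t) (px f x t) x :=
  (diffx hf t x).hasDerivAt

lemma hasDerivAt_slice_t {f : ℝ → ℝ → ℝ} (hf : ContDiff ℝ (⊤ : ℕ∞) (fun r : ℝ × ℝ => f r.1 r.2))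
    (x t : ℝ) : HasDerivAt (fun s => f x s) (pt f x t) t :=
  (difft hf x t).hasDerivAt

/-- System (3.2) transformed by `u = p_x/p`, `v_x = p q` becomes the
Sasa–Satsuma system: given the stated equations for `(u,v)` and for `p`,
the function `q` satisfies `q_t = q_xxx + ε(q² p_x + 3 p q q_x)`. -/
theorem sasa_satsuma_transform (p q v : ℝ → ℝ → ℝ) (ε : ℝ)
    (hp : ContDiff ℝ (⊤ : ℕ∞) (fun r : ℝ × ℝ => p r.1 r.2))
    (hq : ContDiff ℝ (⊤ : ℕ∞) (fun r : ℝ × ℝ => q r.1 r.2))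
    (hv : ContDiff ℝ (⊤ : ℕ∞) (fun r : ℝ × ℝ => v r.1 r.2))
    (hppos : ∀ x t, 0 < p x t)
    (hvx : ∀ x t, px v x t = p x t * q x t)
    (hequ : ∀ x t, pt (fun y s => px p y s / p y s) x t =
      px (px (px (fun y s => px p y s / p y s))) x t
        + 3 * (px p x t / p x t) * px (px (fun y s => px p y s / p y s)) x t
        + 3 * (px p x t / p x t)^2 * px (fun y s => px p y s / p y s) x t
        + 3 * (px (fun y s => px p y s / p y s) x t)^2
        + ε * px (fun y s => px (px v) y s
            + 2 * (px p y s / p y s) * px v y s) x t)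
    (heqv : ∀ x t, pt v x t =
      px (px (px v)) x t - 3 * (px p x t / p x t) * px (px v) x t
        + 3 * (px p x t / p x t)^2 * px v x t + 2 * ε * (px v x t)^2)
    (heqp : ∀ x t, pt p x t =
      px (px (px p)) x t
        + ε * ((p x t)^2 * px q x t + 3 * q x t * p x t * px p x t)) :
    ∀ x t, pt q x t =
      px (px (px q)) x t
        + ε * ((q x t)^2 * px p x t + 3 * p x t * q x t * px q x t) := by
  have hp1 : ContDiff ℝ (⊤ : ℕ∞) (fun r : ℝ × ℝ => px p r.1 r.2) := contDiff_px hp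
  have hp2 : ContDiff ℝ (⊤ : ℕ∞) (fun r : ℝ × ℝ => px (px p) r.1 r.2) := contDiff_px hp1
  have hq1 : ContDiff ℝ (⊤ : ℕ∞) (fun r : ℝ × ℝ => px q r.1 r.2) := contDiff_px hq
  have hq2 : ContDiff ℝ (⊤ : ℕ∞) (fun r : ℝ × ℝ => px (px q) r.1 r.2) := contDiff_px hq1
  have hv1 : ContDiff ℝ (⊤ : ℕ∞) (fun r : ℝ × ℝ => px v r.1 r.2) := contDiff_px hv
  have hv2 : ContDiff ℝ (⊤ : ℕ∞) (fun r : ℝ × ℝ => px (px v) r.1 r.2) := contDiff_px hv1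
  have hv3 : ContDiff ℝ (⊤ : ℕ∞) (fun r : ℝ × ℝ => px (px (px v)) r.1 r.2) := contDiff_px hv2
  -- second x-derivative of v in terms of p and q
  have e2 : ∀ x t, px (px v) x t = px p x t * q x t + p x t * px q x t := by
    intro x t
    have hfun : (fun y => px v y t) = fun y => p y t * q y t := funext fun y => hvx y t
    show deriv (fun y => px v y t) x = _
    rw [hfun]
    exact ((hasDerivAt_slice hp t x).mul (hasDerivAt_slice hq t x)).deriv
  -- third x-derivative of v
  have e3 : ∀ x t, px (px (px v)) x t =
      px (px p) x t * q x t + px p x t * px q x t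
        + (px p x t * px q x t + p x t * px (px q) x t) := by
    intro x t
    have hfun : (fun y => px (px v) y t)
        = fun y => px p y t * q y t + p y t * px q y t := funext fun y => e2 y t
    show deriv (fun y => px (px v) y t) x = _
    rw [hfun]
    exact (((hasDerivAt_slice hp1 t x).mul (hasDerivAt_slice hq t x)).add
      ((hasDerivAt_slice hp t x).mul (hasDerivAt_slice hq1 t x))).deriv
  -- fourth x-derivative of v
  have e4 : ∀ x t, px (px (px (px v))) x t =
      px (px (px p)) x t * q x t + px (px p) x t * px q x t
        + (px (px p) x t * px q x t + px p x t * px (px q) x t)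
        + (px (px p) x t * px q x t + px p x t * px (px q) x t
          + (px p x t * px (px q) x t + p x t * px (px (px q)) x t)) := by
    intro x t
    have hfun : (fun y => px (px (px v)) y t)
        = fun y => px (px p) y t * q y t + px p y t * px q y t
          + (px p y t * px q y t + p y t * px (px q) y t) := funext fun y => e3 y t
    show deriv (fun y => px (px (px v)) y t) x = _
    rw [hfun]
    exact (((((hasDerivAt_slice hp2 t x).mul (hasDerivAt_slice hq t x)).add
      ((hasDerivAt_slice hp1 t x).mul (hasDerivAt_slice hq1 t x))).add
      (((hasDerivAt_slice hp1 t x).mul (hasDerivAt_slice hq1 t x)).add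
      ((hasDerivAt_slice hp t x).mul (hasDerivAt_slice hq2 t x))))).deriv
  -- t-derivative of v_x
  have ePt : ∀ x t, pt (px v) x t = pt p x t * q x t + p x t * pt q x t := by
    intro x t
    have hfun : (fun s => px v x s) = fun s => p x s * q x s := funext fun s => hvx x s
    show deriv (fun s => px v x s) t = _
    rw [hfun]
    exact ((hasDerivAt_slice_t hp x t).mul (hasDerivAt_slice_t hq x t)).deriv
  intro x t
  have hne : p x t ≠ 0 := (hppos x t).ne'
  have hclair : pt (px v) x t = px (pt v) x t := pt_px_comm hv x t
  -- compute the x-derivative of the RHS of heqv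
  have hu : HasDerivAt (fun y => px p y t / p y t)
      ((px (px p) x t * p x t - px p x t * px p x t) / p x t ^ 2) x :=
    (hasDerivAt_slice hp1 t x).div (hasDerivAt_slice hp t x) hne
  have hE : px (pt v) x t =
      px (px (px (px v))) x t
        - ((0 * (px p x t / p x t)
              + 3 * ((px (px p) x t * p x t - px p x t * px p x t) / p x t ^ 2))
            * px (px v) x t
          + 3 * (px p x t / p x t) * px (px (px v)) x t)
        + ((0 * (px p x t / p x t) ^ 2
              + 3 * ((2 : ℕ) * (px p x t / p x t) ^ 1
                * ((px (px p) x t * p x t - px p x t * px p x t) / p x t ^ 2)))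
            * px v x t
          + 3 * (px p x t / p x t) ^ 2 * px (px v) x t)
        + (0 * px v x t ^ 2 + 2 * ε * ((2 : ℕ) * px v x t ^ 1 * px (px v) x t)) := by
    have hfun : (fun y => pt v y t)
        = fun y => px (px (px v)) y t - 3 * (px p y t / p y t) * px (px v) y t
            + 3 * (px p y t / p y t)^2 * px v y t + 2 * ε * (px v y t)^2 :=
      funext fun y => heqv y t
    show deriv (fun y => pt v y t) x = _
    rw [hfun]
    exact ((((hasDerivAt_slice hv3 t x).sub
        (((hasDerivAt_const x (3 : ℝ)).mul hu).mul (hasDerivAt_slice hv2 t x))).add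
        (((hasDerivAt_const x (3 : ℝ)).mul (hu.pow 2)).mul (hasDerivAt_slice hv1 t x))).add
        ((hasDerivAt_const x (2 * ε)).mul ((hasDerivAt_slice hv1 t x).pow 2))).deriv
  -- combine
  have hsum : pt p x t * q x t + p x t * pt q x t = _ := (ePt x t).symm.trans (hclair.trans hE)
  rw [e4 x t, e3 x t, e2 x t, hvx x t, heqp x t] at hsum
  apply mul_left_cancel₀ (pow_ne_zero 9 hne)
  field_simp at hsum
  linear_combination (p x t)^6 * hsum
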